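/- arXiv:2301.00865 — 5 statements merged into one kernel-verified Lean document; each statement's English description precedes it below -/
import Mathlib

section
/- If Ω^{0}·𝟙 = c^{S} and Ω^{k}·𝟙 = 0 for all k = 1,…,n_Ω−1, and the fast method satisfies c^{F} = A^{F}·𝟙, then the fast GARK abscissae satisfy c^{F,F} := (C^{S} ⊗ A^{F})·𝟙 = c^{S} ⊗ c^{F} and c^{F,E} := (Σ_{k=0}^{n_Ω−1} Ω^{k} ⊗ A^{F} c^{F,×k})·𝟙 = c^{S} ⊗ c^{F}, i.e., c^{F,F} = c^{F,E}. -/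
open Matrix Kronecker Finset

/-- Kronecker product of two (column) vectors: `(u ⊗ v)_{(i,j)} = u_i v_j`. -/
def kronVec {m r : ℕ} (u : Fin m → ℝ) (v : Fin r → ℝ) : Fin m × Fin r → ℝ :=
  fun p => u p.1 * v p.2

/-- Kronecker product of a matrix with a column vector: an `(m·r) × n` matrix. -/
def kronMatCol {m n r : ℕ} (A : Matrix (Fin m) (Fin n) ℝ) (v : Fin r → ℝ) :
    Matrix (Fin m × Fin r) (Fin n) ℝ :=
  fun p j => A p.1 j * v p.2

/-- Internal consistency of the fast GARK abscissae: if `Ω⁰𝟙 = c^S`,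
`Ωᵏ𝟙 = 0` for `1 ≤ k < n_Ω`, and `c^F = A^F𝟙`, then
`c^{F,F} = (C^S ⊗ A^F)𝟙 = c^S ⊗ c^F` and
`c^{F,E} = (Σₖ Ωᵏ ⊗ A^F c^{F,×k})𝟙 = c^S ⊗ c^F`, hence `c^{F,F} = c^{F,E}`. -/
theorem fast_gark_abscissae_internal_consistency
    (s r nΩ : ℕ) (hnΩ : 0 < nΩ)
    (Ω : ℕ → Matrix (Fin s) (Fin s) ℝ) (cS : Fin s → ℝ)
    (AF : Matrix (Fin r) (Fin r) ℝ) (cF : Fin r → ℝ)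
    (hcF : cF = AF.mulVec (fun _ => 1))
    (hΩ0 : (Ω 0).mulVec (fun _ => 1) = cS)
    (hΩk : ∀ k, 1 ≤ k → k < nΩ → (Ω k).mulVec (fun _ => 1) = 0) :
    ((Matrix.diagonal cS ⊗ₖ AF).mulVec (fun _ => 1) = kronVec cS cF) ∧
    ((∑ k ∈ Finset.range nΩ,
        kronMatCol (Ω k) (AF.mulVec (fun j => cF j ^ k))).mulVec (fun _ => 1)
      = kronVec cS cF) := by
  constructor
  · funext p
    simp only [mulVec, dotProduct, kroneckerMap_apply, kronVec, mul_one,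
      Fintype.sum_prod_type]
    rw [Finset.sum_comm]
    simp only [← Finset.sum_mul, Matrix.diagonal_apply]
    rw [Finset.sum_eq_single p.1]
    · simp [hcF, mulVec, dotProduct, Finset.mul_sum]
    · intro b _ hb; simp [Ne.symm hb]
    · simp
  · funext p
    simp only [mulVec, Matrix.sum_apply, Finset.sum_apply, dotProduct, kronMatCol, kronVec, mul_one]
    rw [Finset.sum_comm]
    have : ∀ k ∈ Finset.range nΩ,
        (∑ j, Ω k p.1 j * ∑ x : Fin r, AF p.2 x * cF x ^ k)
        = (if k = 0 then cS p.1 * cF p.2 else 0) := by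
      intro k hk
      rcases Nat.eq_zero_or_pos k with h0 | h1
      · subst h0
        have := congrFun hΩ0 p.1
        simp only [mulVec, dotProduct, mul_one] at this
        simp [← Finset.sum_mul, this, hcF, mulVec, dotProduct]
      · have := congrFun (hΩk k h1 (Finset.mem_range.mp hk)) p.1
        simp only [mulVec, dotProduct, mul_one] at this
        simp [← Finset.sum_mul, this, Nat.pos_iff_ne_zero.mp h1]
    rw [Finset.sum_congr rfl this, Finset.sum_ite_eq' (Finset.range nΩ) 0]
    simp [Finset.mem_range.mpr hnΩ]
end

section
/- Suppose b^{σ} ∈ ℝ^s satisfies b^{σ,T} c^{S,×2} = 1/3 and the fast method satisfies b^{F,T} c^{F} = 1/2. Then the GARK third-order coupling condition b^{σ,T} (C^{S} ⊗ b^{F,T}) (c^{S} ⊗ c^{F}) = 1/6 holds automatically. -/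
open Matrix Kronecker

/-- Kronecker product of a matrix with a row vector: an `m × (n·r)` matrix. -/
def kronMatRow {m n r : ℕ} (A : Matrix (Fin m) (Fin n) ℝ) (v : Fin r → ℝ) :
    Matrix (Fin m) (Fin n × Fin r) ℝ :=
  fun i q => A i q.1 * v q.2

/-! The mixed-product rule `(A ⊗ vᵀ)(u ⊗ w) = (A u) ⊗ (vᵀ w)` collapses the coupling term to
`(b^{F,T} c^F) · b^{σ,T} (C^S c^S) = 1/2 · 1/3`. -/

theorem kronMatRow_mulVec_kronVec {m n r : ℕ} (A : Matrix (Fin m) (Fin n) ℝ)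
    (v : Fin r → ℝ) (u : Fin n → ℝ) (w : Fin r → ℝ) :
    kronMatRow A v *ᵥ kronVec u w = (v ⬝ᵥ w) • (A *ᵥ u) := by
  ext i
  simp only [mulVec, dotProduct, kronMatRow, kronVec, Fintype.sum_prod_type, Pi.smul_apply,
    smul_eq_mul, Finset.mul_sum, Finset.sum_mul]
  exact Finset.sum_congr rfl fun j _ => Finset.sum_congr rfl fun k _ => by ring

/-- If `b^{σ,T} c^{S,×2} = 1/3` and `b^{F,T} c^F = 1/2`, then the GARK
third-order coupling condition `b^{σ,T}(C^S ⊗ b^{F,T})(c^S ⊗ c^F) = 1/6`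
holds automatically. -/
theorem third_order_coupling_auto
    (s r : ℕ) (bσ cS : Fin s → ℝ) (bF cF : Fin r → ℝ)
    (hσ : bσ ⬝ᵥ (fun i => cS i ^ 2) = 1 / 3)
    (hF : bF ⬝ᵥ cF = 1 / 2) :
    bσ ⬝ᵥ (kronMatRow (Matrix.diagonal cS) bF).mulVec (kronVec cS cF) = 1 / 6 := by
  have hdiag : diagonal cS *ᵥ cS = fun i => cS i ^ 2 :=
    funext fun i => by rw [mulVec_diagonal, sq]
  rw [kronMatRow_mulVec_kronVec, hdiag, dotProduct_smul, hF, hσ, smul_eq_mul]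
  norm_num
end

section
/- Suppose the fast Runge–Kutta method satisfies the bushy-tree conditions b^{F,T} A^{F} c^{F,×k} = 1/((k+1)(k+2)) for k = 0,…,n_Ω−1. Then the coupling expression (e_s ⊗ b^{F})ᵀ (Σ_{k=0}^{n_Ω−1} Ω^{k} ⊗ A^{F} c^{F,×k}) c^{S} equals e_sᵀ (Σ_{k=0}^{n_Ω−1} Ω^{k}/((k+1)(k+2))) c^{S}. In particular, the GARK condition b^{F,T} A^{F,σ} c^{S} = 1/6 is equivalent to e_sᵀ (Σ_{k=0}^{n_Ω−1} Ω^{k}/((k+1)(k+2))) c^{S} = 1/6. -/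
open Matrix Kronecker Finset

/-- If the fast method satisfies the bushy-tree conditions
`b^{F,T} A^F c^{F,×k} = 1/((k+1)(k+2))` for `k = 0,…,n_Ω−1`, then
`(e_s ⊗ b^F)ᵀ (Σₖ Ωᵏ ⊗ A^F c^{F,×k}) c^S = e_sᵀ (Σₖ Ωᵏ/((k+1)(k+2))) c^S`;
in particular `b^{F,T} A^{F,σ} c^S = 1/6` iff
`e_sᵀ (Σₖ Ωᵏ/((k+1)(k+2))) c^S = 1/6`. -/
theorem coupling_reduction_third_order
    (s r nΩ : ℕ) (Ω : ℕ → Matrix (Fin (s + 1)) (Fin (s + 1)) ℝ)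
    (cS : Fin (s + 1) → ℝ)
    (AF : Matrix (Fin r) (Fin r) ℝ) (bF cF : Fin r → ℝ)
    (hfast : ∀ k < nΩ,
      bF ⬝ᵥ AF.mulVec (fun j => cF j ^ k) = 1 / (((k : ℝ) + 1) * ((k : ℝ) + 2))) :
    (kronVec (Pi.single (Fin.last s) 1) bF ⬝ᵥ
        (∑ k ∈ Finset.range nΩ, kronMatCol (Ω k) (AF.mulVec (fun j => cF j ^ k))).mulVec cS
      = (Pi.single (Fin.last s) (1 : ℝ)) ⬝ᵥ
        (∑ k ∈ Finset.range nΩ, (1 / (((k : ℝ) + 1) * ((k : ℝ) + 2))) • Ω k).mulVec cS) ∧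
    (kronVec (Pi.single (Fin.last s) 1) bF ⬝ᵥ
        (∑ k ∈ Finset.range nΩ, kronMatCol (Ω k) (AF.mulVec (fun j => cF j ^ k))).mulVec cS
        = 1 / 6 ↔
      (Pi.single (Fin.last s) (1 : ℝ)) ⬝ᵥ
        (∑ k ∈ Finset.range nΩ, (1 / (((k : ℝ) + 1) * ((k : ℝ) + 2))) • Ω k).mulVec cS
        = 1 / 6) := by
  have main : kronVec (Pi.single (Fin.last s) 1) bF ⬝ᵥ
        (∑ k ∈ Finset.range nΩ, kronMatCol (Ω k) (AF.mulVec (fun j => cF j ^ k))).mulVec cS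
      = (Pi.single (Fin.last s) (1 : ℝ)) ⬝ᵥ
        (∑ k ∈ Finset.range nΩ, (1 / (((k : ℝ) + 1) * ((k : ℝ) + 2))) • Ω k).mulVec cS := by
    simp only [dotProduct, mulVec, kronVec, kronMatCol, Matrix.sum_apply,
      Matrix.smul_apply, smul_eq_mul, Fintype.sum_prod_type]
    rw [Finset.sum_eq_single (Fin.last s)]
    · simp only [Pi.single_eq_same, one_mul]
      rw [Finset.sum_eq_single (Fin.last s)]
      · simp only [Pi.single_eq_same, one_mul]
        simp only [Finset.sum_mul, Finset.mul_sum]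
        rw [Finset.sum_comm]
        refine Finset.sum_congr rfl fun x1 _ => ?_
        rw [Finset.sum_comm]
        refine Finset.sum_congr rfl fun k hk => ?_
        have h := hfast k (Finset.mem_range.mp hk)
        simp only [dotProduct, mulVec] at h
        rw [← h]
        simp only [Finset.sum_mul, Finset.mul_sum]
        exact Finset.sum_congr rfl fun x _ =>
          Finset.sum_congr rfl fun x3 _ => by ring
      · intro b _ hb; simp [Pi.single_eq_of_ne hb]
      · simp
    · intro b _ hb; simp [Pi.single_eq_of_ne hb]
    · simp
  exact ⟨main, by rw [main]⟩
end

section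
/- Suppose b^{σ,T} c^{S,×3} = 1/4 and the fast method satisfies b^{F,T} C^{F} c^{F} = b^{F,T} c^{F,×2} = 1/3. Then the condition b^{σ,T} (C^{S} ⊗ b^{F,T}) diag(c^{S} ⊗ c^{F}) (c^{S} ⊗ c^{F}) = 1/12 holds. -/
open Matrix Kronecker

/-- If `b^{σ,T} c^{S,×3} = 1/4` and `b^{F,T} C^F c^F = b^{F,T} c^{F,×2} = 1/3`,
then `b^{σ,T} (C^S ⊗ b^{F,T}) diag(c^S ⊗ c^F)(c^S ⊗ c^F) = 1/12`. -/
theorem fourth_order_condition_c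
    (s r : ℕ) (bσ cS : Fin s → ℝ) (bF cF : Fin r → ℝ)
    (hσ : bσ ⬝ᵥ (fun i => cS i ^ 3) = 1 / 4)
    (hF : bF ⬝ᵥ (fun j => cF j ^ 2) = 1 / 3) :
    bσ ⬝ᵥ (kronMatRow (Matrix.diagonal cS) bF).mulVec
        ((Matrix.diagonal (kronVec cS cF)).mulVec (kronVec cS cF)) = 1 / 12 := by
  simp only [dotProduct, Matrix.mulVec, Matrix.mulVec_diagonal, kronMatRow, kronVec,
    Matrix.diagonal_apply, Fintype.sum_prod_type, ite_mul, zero_mul,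
    Prod.mk.injEq, ite_and, Finset.sum_ite_eq, Finset.sum_ite_eq', Finset.mem_univ,
    if_true] at *
  have swap : ∀ x : Fin s, (∑ x1 : Fin s, ∑ x2 : Fin r,
      if x = x1 then cS x * bF x2 * (cS x1 * cF x2 * (cS x1 * cF x2)) else 0)
      = ∑ j : Fin r, cS x * bF j * (cS x * cF j * (cS x * cF j)) := by
    intro x
    rw [Finset.sum_comm]
    simp
  simp only [swap]
  have : ∀ i : Fin s, bσ i * ∑ j : Fin r, cS i * bF j * (cS i * cF j * (cS i * cF j))
      = (bσ i * cS i ^ 3) * ∑ j : Fin r, bF j * cF j ^ 2 := by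
    intro i
    rw [Finset.mul_sum, Finset.mul_sum]
    exact Finset.sum_congr rfl fun j _ => by ring
  rw [Finset.sum_congr rfl fun i _ => this i, ← Finset.sum_mul, hσ, hF]
  norm_num
end

section
/- Suppose b^{σ,T} c^{S,×3} = 1/4 and the fast method satisfies b^{F,T} A^{F} c^{F} = 1/6. Then the condition b^{σ,T} (C^{S} ⊗ b^{F,T}) (C^{S} ⊗ A^{F}) (c^{S} ⊗ c^{F}) = 1/24 holds. -/
open Matrix Kronecker

/-- If `b^{σ,T} c^{S,×3} = 1/4` and `b^{F,T} A^F c^F = 1/6`, then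
`b^{σ,T} (C^S ⊗ b^{F,T})(C^S ⊗ A^F)(c^S ⊗ c^F) = 1/24`. -/
theorem fourth_order_condition_d
    (s r : ℕ) (bσ cS : Fin s → ℝ) (AF : Matrix (Fin r) (Fin r) ℝ) (bF cF : Fin r → ℝ)
    (hσ : bσ ⬝ᵥ (fun i => cS i ^ 3) = 1 / 4)
    (hF : bF ⬝ᵥ AF.mulVec cF = 1 / 6) :
    bσ ⬝ᵥ (kronMatRow (Matrix.diagonal cS) bF).mulVec
        ((Matrix.diagonal cS ⊗ₖ AF).mulVec (kronVec cS cF)) = 1 / 24 := by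
  have h1 : (Matrix.diagonal cS ⊗ₖ AF).mulVec (kronVec cS cF)
      = fun p => cS p.1 ^ 2 * AF.mulVec cF p.2 := by
    funext p
    simp only [mulVec, dotProduct, kronVec, kroneckerMap_apply, Matrix.diagonal_apply,
      Fintype.sum_prod_type, ite_mul, zero_mul]
    rw [Finset.sum_comm]
    simp only [Finset.sum_ite_eq, Finset.mem_univ, if_true, Finset.mul_sum]
    exact Finset.sum_congr rfl fun l _ => by ring
  rw [h1]
  have h2 : (kronMatRow (Matrix.diagonal cS) bF).mulVec
      (fun p => cS p.1 ^ 2 * AF.mulVec cF p.2)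
      = fun i => cS i ^ 3 * (bF ⬝ᵥ AF.mulVec cF) := by
    funext i
    simp only [mulVec, dotProduct, kronMatRow, Matrix.diagonal_apply,
      Fintype.sum_prod_type, ite_mul, zero_mul]
    rw [Finset.sum_comm]
    simp only [Finset.sum_ite_eq, Finset.mem_univ, if_true, dotProduct, Finset.mul_sum]
    refine Finset.sum_congr rfl fun k _ => Finset.sum_congr rfl fun l _ => by ring
  rw [h2]
  have h3 : bσ ⬝ᵥ (fun i => cS i ^ 3 * (bF ⬝ᵥ AF.mulVec cF))
      = (bσ ⬝ᵥ fun i => cS i ^ 3) * (bF ⬝ᵥ AF.mulVec cF) := by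
    simp only [dotProduct, Finset.sum_mul]
    exact Finset.sum_congr rfl fun i _ => by ring
  rw [h3, hσ, hF]; norm_num
end
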